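/- arXiv:2310.04581 — 2 statements merged into one kernel-verified Lean document; each statement's English description precedes it below -/
import Mathlib

section
/- Let M be a nonzero p×q matrix over ℕ. (a) Define C*_1(M) to be the multiset of all (i,j) ∈ msupp(M) such that every (i',j') ∈ supp(M) satisfies i' ≥ i or j' ≤ j, and recursively let C*_{m+1} be C*_1 applied to the multiset obtained from msupp(M) by removing C*_1,…,C*_m. Then the underlying set of each nonempty C*_m is a maximal chain (with respect to the order of P_GL(p,q)) in the support of the remaining multiset, and the number of nonempty C*_m equals the width of supp(M). (b) Define D_1(M) to be the set of minimal elements of supp(M) in P_GL(p,q), and recursively let D_{m+1} be the set of minimal elements of the support of the multiset obtained from msupp(M) by removing one copy of each element of D_1,…,D_m. Then each nonempty D_m is a maximal antichain in the support of the remaining multiset, the number of nonempty D_m equals the height of msupp(M), and for every m the upper order ideal of P_GL(p,q) generated by D_m contains the upper order ideal generated by D_{m+1}. -/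
/-!
`C*₁(N)` is a chain in `supp N`, and an antichain of `supp N` avoiding it can be enlarged by
the element of `C*₁(N)` lying north-east of its topmost point. As a chain meets an antichain at
most once, removing `C*₁(N)` lowers the width of the support by exactly one. Dually, `D₁(N)` is
the antichain of minimal elements of `supp N`, every chain can be prolonged downwards by one of
them, and a chain meets `D₁(N)` at most once, so removing one copy of each element of `D₁(N)`
lowers the height by exactly one. Hence `C*_{m+1}` (resp. `D_{m+1}`) is nonempty exactly when
`m` is below the width (resp. height).
-/

open scoped Classical

noncomputable section

def matSupp {p q : ℕ} (M : Matrix (Fin p) (Fin q) ℕ) : Set (Fin p × Fin q) :=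
  {x | M x.1 x.2 ≠ 0}

/-- The order of the poset `P_GL(p,q)`. -/
def rGL {p q : ℕ} (a b : Fin p × Fin q) : Prop :=
  a.1 ≤ b.1 ∧ a.2 ≤ b.2

def relWidth {α : Type*} (r : α → α → Prop) (S : Set α) : ℕ :=
  sSup {n | ∃ A : Finset α, ↑A ⊆ S ∧ IsAntichain r ↑A ∧ A.card = n}

def msuppHeight {p q : ℕ} (r : Fin p × Fin q → Fin p × Fin q → Prop)
    (M : Matrix (Fin p) (Fin q) ℕ) : ℕ :=
  sSup {m | ∃ C : Finset (Fin p × Fin q), ↑C ⊆ matSupp M ∧ IsChain r ↑C ∧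
    ∑ x ∈ C, M x.1 x.2 = m}

/-- `C*₁(M)`. -/
def cStep {p q : ℕ} (M : Matrix (Fin p) (Fin q) ℕ) : Set (Fin p × Fin q) :=
  {x | M x.1 x.2 ≠ 0 ∧ ∀ y : Fin p × Fin q, M y.1 y.2 ≠ 0 → x.1 ≤ y.1 ∨ y.2 ≤ x.2}

/-- The matrix recording the multiset obtained from `msupp M` after removing
`C*₁, …, C*ₘ` (each `C*` removes all copies of its elements). -/
def cMat {p q : ℕ} (M : Matrix (Fin p) (Fin q) ℕ) : ℕ → Matrix (Fin p) (Fin q) ℕ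
  | 0 => M
  | m + 1 => fun i j => if (i, j) ∈ cStep (cMat M m) then 0 else cMat M m i j

/-- `D₁(M)`, the set of minimal elements of `supp M`. -/
def dStep {p q : ℕ} (M : Matrix (Fin p) (Fin q) ℕ) : Set (Fin p × Fin q) :=
  {x | M x.1 x.2 ≠ 0 ∧ ∀ y : Fin p × Fin q, M y.1 y.2 ≠ 0 → rGL y x → y = x}

/-- The matrix recording the multiset obtained from `msupp M` after removing one copy
of each element of `D₁, …, Dₘ`. -/
def dMat {p q : ℕ} (M : Matrix (Fin p) (Fin q) ℕ) : ℕ → Matrix (Fin p) (Fin q) ℕ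
  | 0 => M
  | m + 1 => fun i j => if (i, j) ∈ dStep (dMat M m) then dMat M m i j - 1 else dMat M m i j

def upIdeal {p q : ℕ} (S : Set (Fin p × Fin q)) : Set (Fin p × Fin q) :=
  {z | ∃ x ∈ S, rGL x z}

lemma rGL_eq_le {p q : ℕ} : (rGL : Fin p × Fin q → Fin p × Fin q → Prop) = (· ≤ ·) := rfl

lemma Finset.card_filter_mem_le_one {α : Type*} {s : Finset α} {t : Set α}
    (h : (↑s ∩ t).Subsingleton) : (s.filter (· ∈ t)).card ≤ 1 :=
  Finset.card_le_one.2 fun _ ha _ hb => h (Finset.mem_filter.1 ha) (Finset.mem_filter.1 hb)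

lemma Nat.card_subtype_of_iff_lt {P : ℕ → Prop} {n : ℕ} (h : ∀ m, P m ↔ m < n) :
    Nat.card {m : ℕ // P m} = n := by
  rw [show P = (· < n) from funext fun m => propext (h m), ← Nat.card_congr Fin.equivSubtype,
    Nat.card_eq_fintype_card, Fintype.card_fin]

section Width

variable {α : Type*} [Fintype α] (r : α → α → Prop) (S : Set α)

lemma bddAbove_relWidth_set :
    BddAbove {n | ∃ A : Finset α, ↑A ⊆ S ∧ IsAntichain r ↑A ∧ A.card = n} :=
  ⟨Fintype.card α, by rintro n ⟨A, -, -, rfl⟩; exact A.card_le_univ⟩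

lemma exists_isAntichain_card_eq_relWidth :
    ∃ A : Finset α, ↑A ⊆ S ∧ IsAntichain r ↑A ∧ A.card = relWidth r S := by
  refine Nat.sSup_mem ?_ (bddAbove_relWidth_set r S)
  exact ⟨0, ∅, by simp, by simp, rfl⟩

variable {r S}

lemma card_le_relWidth {A : Finset α} (hAS : ↑A ⊆ S) (hA : IsAntichain r ↑A) :
    A.card ≤ relWidth r S :=
  le_csSup (bddAbove_relWidth_set r S) ⟨A, hAS, hA, rfl⟩

variable (r)

lemma relWidth_empty : relWidth r (∅ : Set α) = 0 := by
  obtain ⟨A, hA, -, hcard⟩ := exists_isAntichain_card_eq_relWidth r (∅ : Set α)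
  rw [← hcard, Finset.card_eq_zero, ← Finset.coe_eq_empty]
  exact Set.subset_empty_iff.1 hA

lemma relWidth_pos_iff : 0 < relWidth r S ↔ S.Nonempty := by
  refine ⟨fun h => ?_, fun ⟨x, hx⟩ => ?_⟩
  · obtain ⟨A, hA, -, hcard⟩ := exists_isAntichain_card_eq_relWidth r S
    obtain ⟨x, hx⟩ := Finset.card_pos.1 (hcard ▸ h)
    exact ⟨x, hA hx⟩
  · exact card_le_relWidth (A := {x}) (r := r) (by simpa using hx) (by simp)

end Width

section Height

variable {p q : ℕ} (r : Fin p × Fin q → Fin p × Fin q → Prop)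

lemma bddAbove_msuppHeight_set (N : Matrix (Fin p) (Fin q) ℕ) :
    BddAbove {m | ∃ C : Finset (Fin p × Fin q), ↑C ⊆ matSupp N ∧
      IsChain r (C : Set (Fin p × Fin q)) ∧ ∑ x ∈ C, N x.1 x.2 = m} :=
  ⟨∑ x : Fin p × Fin q, N x.1 x.2, by
    rintro n ⟨C, -, -, rfl⟩; exact Finset.sum_le_sum_of_subset C.subset_univ⟩

lemma exists_isChain_sum_eq_msuppHeight (N : Matrix (Fin p) (Fin q) ℕ) :
    ∃ C : Finset (Fin p × Fin q), ↑C ⊆ matSupp N ∧ IsChain r (C : Set (Fin p × Fin q)) ∧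
      ∑ x ∈ C, N x.1 x.2 = msuppHeight r N :=
  Nat.sSup_mem (by exact ⟨0, ∅, by simp, by simp, rfl⟩) (bddAbove_msuppHeight_set r N)

variable {r}

lemma sum_le_msuppHeight {N : Matrix (Fin p) (Fin q) ℕ} {C : Finset (Fin p × Fin q)}
    (hC : IsChain r (C : Set (Fin p × Fin q))) : ∑ x ∈ C, N x.1 x.2 ≤ msuppHeight r N := by
  rw [← Finset.sum_filter_ne_zero]
  refine le_csSup (bddAbove_msuppHeight_set r N) ⟨_, fun x hx => ?_, hC.mono ?_, rfl⟩
  · exact (Finset.mem_filter.1 hx).2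
  · exact Finset.coe_subset.2 (Finset.filter_subset _ _)

variable (r)

lemma msuppHeight_pos_iff (N : Matrix (Fin p) (Fin q) ℕ) :
    0 < msuppHeight r N ↔ (matSupp N).Nonempty := by
  refine ⟨fun h => ?_, fun ⟨x, hx⟩ => ?_⟩
  · obtain ⟨C, -, -, hsum⟩ := exists_isChain_sum_eq_msuppHeight r N
    obtain ⟨x, -, hx⟩ := Finset.exists_ne_zero_of_sum_ne_zero (hsum ▸ h.ne')
    exact ⟨x, hx⟩
  · have := sum_le_msuppHeight (N := N) (C := {x}) (r := r) (by simp)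
    rw [Finset.sum_singleton] at this
    exact (Nat.pos_of_ne_zero hx).trans_le this

end Height

section CStep

variable {p q : ℕ} {N : Matrix (Fin p) (Fin q) ℕ}

lemma cStep_isChain (N : Matrix (Fin p) (Fin q) ℕ) : IsChain (· ≤ ·) (cStep N) := by
  intro a ha b hb _
  have := ha.2 b hb.1
  have := hb.2 a ha.1
  simp only [Prod.le_def]
  grind

lemma exists_cStep_lt_lt {x : Fin p × Fin q} (hx : x ∈ matSupp N) (hxc : x ∉ cStep N) :
    ∃ z ∈ cStep N, z.1 < x.1 ∧ x.2 < z.2 := by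
  let P : Fin p × Fin q → Prop := fun y => N y.1 y.2 ≠ 0 ∧ y.1 < x.1 ∧ x.2 < y.2
  have hP : ∃ y, P y := by
    simp only [cStep, Set.mem_ofPred_eq, not_and, not_forall, not_or, not_le] at hxc
    obtain ⟨y, hy, hy1, hy2⟩ := hxc hx
    exact ⟨y, hy, hy1, hy2⟩
  -- the entry of `P` in the highest row is not dominated by any entry of the support
  obtain ⟨z, ⟨hz, hz1, hz2⟩, hmin⟩ := exists_minimalFor_of_wellFoundedLT P Prod.fst hP
  refine ⟨z, ⟨hz, fun w hw => ?_⟩, hz1, hz2⟩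
  by_contra! hzw
  exact hzw.1.not_ge (hmin ⟨hw, hzw.1.trans hz1, hz2.trans hzw.2⟩ hzw.1.le)

lemma cStep_nonempty_iff : (cStep N).Nonempty ↔ (matSupp N).Nonempty := by
  refine ⟨fun ⟨x, hx⟩ => ⟨x, hx.1⟩, fun ⟨x, hx⟩ => ?_⟩
  by_cases hxc : x ∈ cStep N
  · exact ⟨x, hxc⟩
  · obtain ⟨z, hz, -⟩ := exists_cStep_lt_lt hx hxc
    exact ⟨z, hz⟩

lemma eq_cStep_of_isChain {C : Set (Fin p × Fin q)} (hC : IsChain (· ≤ ·) C)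
    (hCN : C ⊆ matSupp N) (hcC : cStep N ⊆ C) : C = cStep N := by
  refine hcC.antisymm' fun x hx => ?_
  by_contra hxc
  obtain ⟨z, hz, hz1, hz2⟩ := exists_cStep_lt_lt (hCN hx) hxc
  rcases hC.total hx (hcC hz) with h | h
  · exact hz1.not_ge h.1
  · exact hz2.not_ge h.2

lemma exists_cStep_insert_isAntichain {A : Finset (Fin p × Fin q)}
    (hA : IsAntichain (· ≤ ·) (A : Set (Fin p × Fin q))) (hAN : ↑A ⊆ matSupp N)
    (hAc : ∀ a ∈ A, a ∉ cStep N) (hN : (matSupp N).Nonempty) :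
    ∃ z ∈ cStep N, IsAntichain (· ≤ ·) (insert z A : Set (Fin p × Fin q)) := by
  rcases A.eq_empty_or_nonempty with rfl | hAne
  · obtain ⟨z, hz⟩ := cStep_nonempty_iff.2 hN
    exact ⟨z, hz, by simp⟩
  obtain ⟨a, ha, hmin⟩ := A.exists_min_image Prod.fst hAne
  obtain ⟨z, hz, hz1, hz2⟩ := exists_cStep_lt_lt (hAN ha) (hAc a ha)
  have hright : ∀ b ∈ A, b.2 ≤ a.2 := fun b hb => by
    by_contra! h
    exact h.ne (congrArg Prod.snd (hA.eq ha hb ⟨hmin b hb, h.le⟩))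
  refine ⟨z, hz, hA.insert (fun b hb _ h => ?_) (fun b hb _ h => ?_)⟩
  · exact (hz1.trans_le (hmin b hb)).not_ge h.1
  · exact ((hright b hb).trans_lt hz2).not_ge h.2

lemma relWidth_diff_cStep (N : Matrix (Fin p) (Fin q) ℕ) :
    relWidth (· ≤ ·) (matSupp N \ cStep N) = relWidth (· ≤ ·) (matSupp N) - 1 := by
  rcases (matSupp N).eq_empty_or_nonempty with hN | hN
  · simp only [hN, Set.empty_sdiff, relWidth_empty]
  have hle : relWidth (· ≤ ·) (matSupp N \ cStep N) + 1 ≤ relWidth (· ≤ ·) (matSupp N) := by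
    obtain ⟨A, hAN, hA, hcard⟩ := exists_isAntichain_card_eq_relWidth (· ≤ ·) (matSupp N \ cStep N)
    obtain ⟨z, hz, hzA⟩ :=
      exists_cStep_insert_isAntichain hA (hAN.trans Set.sdiff_subset) (fun a ha => (hAN ha).2) hN
    have hzA' : z ∉ A := fun h => (hAN h).2 hz
    rw [← hcard, ← Finset.card_insert_of_notMem hzA']
    refine card_le_relWidth ?_ (by simpa using hzA)
    simpa [Set.insert_subset_iff] using ⟨hz.1, hAN.trans Set.sdiff_subset⟩
  have hge : relWidth (· ≤ ·) (matSupp N) ≤ relWidth (· ≤ ·) (matSupp N \ cStep N) + 1 := by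
    obtain ⟨A, hAN, hA, hcard⟩ := exists_isAntichain_card_eq_relWidth (· ≤ ·) (matSupp N)
    have hmeet : (A.filter (· ∈ cStep N)).card ≤ 1 := Finset.card_filter_mem_le_one
      (inter_subsingleton_of_isAntichain_of_isChain hA (cStep_isChain N))
    have hrest : (A.filter (· ∉ cStep N)).card ≤ relWidth (· ≤ ·) (matSupp N \ cStep N) := by
      refine card_le_relWidth (fun x hx => ?_) (hA.subset (Finset.coe_subset.2 (A.filter_subset _)))
      simp only [Finset.coe_filter, Set.mem_ofPred_eq] at hx
      exact ⟨hAN hx.1, hx.2⟩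
    have := Finset.card_filter_add_card_filter_not (s := A) (· ∈ cStep N)
    omega
  omega

lemma matSupp_cMat_succ (M : Matrix (Fin p) (Fin q) ℕ) (m : ℕ) :
    matSupp (cMat M (m + 1)) = matSupp (cMat M m) \ cStep (cMat M m) := by
  ext ⟨i, j⟩
  by_cases h : (i, j) ∈ cStep (cMat M m) <;> simp [matSupp, cMat, h]

lemma relWidth_matSupp_cMat (M : Matrix (Fin p) (Fin q) ℕ) (m : ℕ) :
    relWidth (· ≤ ·) (matSupp (cMat M m)) = relWidth (· ≤ ·) (matSupp M) - m := by
  induction m with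
  | zero => rfl
  | succ m ih => rw [matSupp_cMat_succ, relWidth_diff_cStep, ih, Nat.sub_sub]

lemma card_cStep_cMat_nonempty (M : Matrix (Fin p) (Fin q) ℕ) :
    Nat.card {m : ℕ // (cStep (cMat M m)).Nonempty} = relWidth (· ≤ ·) (matSupp M) :=
  Nat.card_subtype_of_iff_lt fun m => by
    rw [cStep_nonempty_iff, ← relWidth_pos_iff (· ≤ ·), relWidth_matSupp_cMat]
    omega

end CStep

section DStep

variable {p q : ℕ} {N : Matrix (Fin p) (Fin q) ℕ}

lemma dStep_eq_setOf_minimal (N : Matrix (Fin p) (Fin q) ℕ) :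
    dStep N = {x | Minimal (· ∈ matSupp N) x} := by
  ext x
  rw [Set.mem_ofPred_eq, minimal_iff]
  exact ⟨fun ⟨hx, h⟩ => ⟨hx, fun y hy hyx => (h y hy hyx).symm⟩,
    fun ⟨hx, h⟩ => ⟨hx, fun y hy hyx => (h hy hyx).symm⟩⟩

lemma dStep_isAntichain (N : Matrix (Fin p) (Fin q) ℕ) : IsAntichain (· ≤ ·) (dStep N) :=
  dStep_eq_setOf_minimal N ▸ setOfPred_minimal_antichain _

lemma exists_dStep_le {x : Fin p × Fin q} (hx : x ∈ matSupp N) : ∃ d ∈ dStep N, d ≤ x := by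
  obtain ⟨d, hdx, hd⟩ := exists_minimal_le_of_wellFoundedLT (· ∈ matSupp N) x hx
  exact ⟨d, dStep_eq_setOf_minimal N ▸ hd, hdx⟩

lemma dStep_nonempty_iff : (dStep N).Nonempty ↔ (matSupp N).Nonempty := by
  refine ⟨fun ⟨x, hx⟩ => ⟨x, hx.1⟩, fun ⟨x, hx⟩ => ?_⟩
  obtain ⟨d, hd, -⟩ := exists_dStep_le hx
  exact ⟨d, hd⟩

lemma eq_dStep_of_isAntichain {A : Set (Fin p × Fin q)} (hA : IsAntichain (· ≤ ·) A)
    (hAN : A ⊆ matSupp N) (hdA : dStep N ⊆ A) : A = dStep N := by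
  refine hdA.antisymm' fun a ha => ?_
  obtain ⟨d, hd, hda⟩ := exists_dStep_le (hAN ha)
  exact hA.eq (hdA hd) ha hda ▸ hd

lemma upIdeal_dStep_subset {N' : Matrix (Fin p) (Fin q) ℕ} (h : matSupp N' ⊆ matSupp N) :
    upIdeal (dStep N') ⊆ upIdeal (dStep N) := by
  rintro z ⟨x, hx, hxz⟩
  obtain ⟨d, hd, hdx⟩ := exists_dStep_le (h hx.1)
  exact ⟨d, hd, le_trans (α := Fin p × Fin q) hdx hxz⟩

lemma exists_dStep_insert_isChain {C : Finset (Fin p × Fin q)}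
    (hC : IsChain (· ≤ ·) (C : Set (Fin p × Fin q))) (hCN : ↑C ⊆ matSupp N)
    (hN : (matSupp N).Nonempty) :
    ∃ d ∈ dStep N, IsChain (· ≤ ·) ((insert d C : Finset _) : Set (Fin p × Fin q)) := by
  obtain ⟨c, hc, hcC⟩ : ∃ c ∈ matSupp N, ∀ b ∈ C, c ≤ b := by
    rcases C.eq_empty_or_nonempty with rfl | ⟨b, hb⟩
    · obtain ⟨c, hc⟩ := hN
      exact ⟨c, hc, by simp⟩
    · obtain ⟨c, -, hcmin⟩ := exists_minimal_le_of_wellFoundedLT (· ∈ C) b hb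
      exact ⟨c, hCN hcmin.prop, fun b hb => hC.le_of_not_gt hb hcmin.prop (hcmin.not_lt hb)⟩
  obtain ⟨d, hd, hdc⟩ := exists_dStep_le hc
  refine ⟨d, hd, ?_⟩
  rw [Finset.coe_insert]
  exact hC.insert fun b hb _ => Or.inl (hdc.trans (hcC b hb))

lemma matSupp_subset_of_le {N' : Matrix (Fin p) (Fin q) ℕ}
    (h : ∀ x : Fin p × Fin q, N' x.1 x.2 ≤ N x.1 x.2) : matSupp N' ⊆ matSupp N :=
  fun x hx => (Nat.pos_of_ne_zero hx).trans_le (h x) |>.ne'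

lemma msuppHeight_eq_sub_one {N' : Matrix (Fin p) (Fin q) ℕ}
    (h : ∀ x : Fin p × Fin q, N' x.1 x.2 + (if x ∈ dStep N then 1 else 0) = N x.1 x.2) :
    msuppHeight (· ≤ ·) N' = msuppHeight (· ≤ ·) N - 1 := by
  have hsum (C : Finset (Fin p × Fin q)) :
      ∑ x ∈ C, N x.1 x.2 = ∑ x ∈ C, N' x.1 x.2 + (C.filter (· ∈ dStep N)).card := by
    simp_rw [← h, Finset.sum_add_distrib, Finset.sum_boole, Nat.cast_id]
  have hN'N : matSupp N' ⊆ matSupp N := matSupp_subset_of_le fun x => h x ▸ Nat.le_add_right _ _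
  rcases (matSupp N).eq_empty_or_nonempty with hN | hN
  · have hpos' : ¬ 0 < msuppHeight (· ≤ ·) N' := by
      rw [msuppHeight_pos_iff (· ≤ ·), Set.not_nonempty_iff_eq_empty]
      exact Set.subset_empty_iff.1 (hN ▸ hN'N)
    have hpos : ¬ 0 < msuppHeight (· ≤ ·) N := by simp [msuppHeight_pos_iff (· ≤ ·), hN]
    omega
  have hle : msuppHeight (· ≤ ·) N ≤ msuppHeight (· ≤ ·) N' + 1 := by
    obtain ⟨C, -, hC, hCsum⟩ := exists_isChain_sum_eq_msuppHeight (· ≤ ·) N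
    have hmeet : (C.filter (· ∈ dStep N)).card ≤ 1 := Finset.card_filter_mem_le_one
      (inter_subsingleton_of_isChain_of_isAntichain hC (dStep_isAntichain N))
    have := sum_le_msuppHeight (N := N') hC
    rw [← hCsum, hsum]
    omega
  have hge : msuppHeight (· ≤ ·) N' + 1 ≤ msuppHeight (· ≤ ·) N := by
    obtain ⟨C, hCN', hC, hCsum⟩ := exists_isChain_sum_eq_msuppHeight (· ≤ ·) N'
    obtain ⟨d, hd, hdC⟩ := exists_dStep_insert_isChain hC (hCN'.trans hN'N) hN
    calc msuppHeight (· ≤ ·) N' + 1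
        ≤ ∑ x ∈ insert d C, N' x.1 x.2 + ((insert d C).filter (· ∈ dStep N)).card := by
          rw [← hCsum]
          refine add_le_add (Finset.sum_le_sum_of_subset (Finset.subset_insert _ _)) ?_
          exact Finset.card_pos.2 ⟨d, Finset.mem_filter.2 ⟨Finset.mem_insert_self _ _, hd⟩⟩
      _ = ∑ x ∈ insert d C, N x.1 x.2 := (hsum _).symm
      _ ≤ msuppHeight (· ≤ ·) N := sum_le_msuppHeight hdC
  omega

lemma dMat_succ_add_ite (M : Matrix (Fin p) (Fin q) ℕ) (m : ℕ) (x : Fin p × Fin q) :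
    dMat M (m + 1) x.1 x.2 + (if x ∈ dStep (dMat M m) then 1 else 0) = dMat M m x.1 x.2 := by
  simp only [dMat, Prod.mk.eta]
  split_ifs with hx
  · have := hx.1
    omega
  · rfl

lemma msuppHeight_dMat (M : Matrix (Fin p) (Fin q) ℕ) (m : ℕ) :
    msuppHeight (· ≤ ·) (dMat M m) = msuppHeight (· ≤ ·) M - m := by
  induction m with
  | zero => rfl
  | succ m ih => rw [msuppHeight_eq_sub_one (dMat_succ_add_ite M m), ih, Nat.sub_sub]

lemma card_dStep_dMat_nonempty (M : Matrix (Fin p) (Fin q) ℕ) :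
    Nat.card {m : ℕ // (dStep (dMat M m)).Nonempty} = msuppHeight (· ≤ ·) M :=
  Nat.card_subtype_of_iff_lt fun m => by
    rw [dStep_nonempty_iff, ← msuppHeight_pos_iff (· ≤ ·), msuppHeight_dMat]
    omega

lemma upIdeal_dStep_dMat_succ_subset (M : Matrix (Fin p) (Fin q) ℕ) (m : ℕ) :
    upIdeal (dStep (dMat M (m + 1))) ⊆ upIdeal (dStep (dMat M m)) :=
  upIdeal_dStep_subset <| matSupp_subset_of_le fun x =>
    dMat_succ_add_ite M m x ▸ Nat.le_add_right _ _

end DStep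

/-- `cStep (cMat M m)` is `C*_{m+1}` and `dStep (dMat M m)` is `D_{m+1}`. -/
theorem statement3_general (p q : ℕ) (M : Matrix (Fin p) (Fin q) ℕ) :
    -- (a)
    ((∀ m : ℕ, (cStep (cMat M m)).Nonempty →
        IsChain rGL (cStep (cMat M m)) ∧
        ∀ C : Set (Fin p × Fin q), IsChain rGL C → C ⊆ matSupp (cMat M m) →
          cStep (cMat M m) ⊆ C → C = cStep (cMat M m)) ∧
      Nat.card {m : ℕ // (cStep (cMat M m)).Nonempty} = relWidth rGL (matSupp M)) ∧
    -- (b)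
    ((∀ m : ℕ, (dStep (dMat M m)).Nonempty →
        IsAntichain rGL (dStep (dMat M m)) ∧
        ∀ A : Set (Fin p × Fin q), IsAntichain rGL A → A ⊆ matSupp (dMat M m) →
          dStep (dMat M m) ⊆ A → A = dStep (dMat M m)) ∧
      Nat.card {m : ℕ // (dStep (dMat M m)).Nonempty} = msuppHeight rGL M ∧
      ∀ m : ℕ, upIdeal (dStep (dMat M (m + 1))) ⊆ upIdeal (dStep (dMat M m))) := by
  rw [rGL_eq_le]
  exact ⟨⟨fun _ _ => ⟨cStep_isChain _, fun _ hC hCN hcC => eq_cStep_of_isChain hC hCN hcC⟩,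
      card_cStep_cMat_nonempty M⟩,
    ⟨fun _ _ => ⟨dStep_isAntichain _, fun _ hA hAN hdA => eq_dStep_of_isAntichain hA hAN hdA⟩,
      card_dStep_dMat_nonempty M, upIdeal_dStep_dMat_succ_subset M⟩⟩

/-- properties of the chain decomposition `C*_m` and the antichain
decomposition `D_m` of the multisupport of a nonzero matrix `M`.
(Here `cStep (cMat M m)` is `C*_{m+1}` and `dStep (dMat M m)` is `D_{m+1}`.) -/
theorem statement3 (p q : ℕ) (M : Matrix (Fin p) (Fin q) ℕ) (hM : M ≠ 0) :
    -- (a)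
    ((∀ m : ℕ, (cStep (cMat M m)).Nonempty →
        IsChain rGL (cStep (cMat M m)) ∧
        ∀ C : Set (Fin p × Fin q), IsChain rGL C → C ⊆ matSupp (cMat M m) →
          cStep (cMat M m) ⊆ C → C = cStep (cMat M m)) ∧
      Nat.card {m : ℕ // (cStep (cMat M m)).Nonempty} = relWidth rGL (matSupp M)) ∧
    -- (b)
    ((∀ m : ℕ, (dStep (dMat M m)).Nonempty →
        IsAntichain rGL (dStep (dMat M m)) ∧
        ∀ A : Set (Fin p × Fin q), IsAntichain rGL A → A ⊆ matSupp (dMat M m) →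
          dStep (dMat M m) ⊆ A → A = dStep (dMat M m)) ∧
      Nat.card {m : ℕ // (dStep (dMat M m)).Nonempty} = msuppHeight rGL M ∧
      ∀ m : ℕ, upIdeal (dStep (dMat M (m + 1))) ⊆ upIdeal (dStep (dMat M m))) :=
  statement3_general p q M
end
end

section
/- Let dim_ℂ V = k and let SL(V) ⊂ GL(V) be the subgroup of operators of determinant 1, acting diagonally on V^{⊗p} ⊗ (V*)^{⊗q}. Then the space of invariant tensors (V^{⊗p} ⊗ (V*)^{⊗q})^{SL(V)} is nonzero if and only if k divides p − q. -/
/-!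
If `k ∣ p - q`, write `p = m k + s` and `q = n k + s`. In a basis of `V` and its dual basis, a
tensor is a coefficient array on which `g` acts by the Kronecker product of its matrix `M` (on the
`V` slots) and of `(M⁻¹)ᵀ` (on the `V*` slots). Fixed arrays multiply under juxtaposition of slots,
and there are three basic ones: the Levi-Civita symbol on `k` slots of `V` (fixed since
`det M = 1`), the same on `k` slots of `V*`, and the Kronecker delta on one slot of each (fixed
since `M M⁻¹ = 1`). The product `ε^{⊗m} ⊗ ε*^{⊗n} ⊗ δ^{⊗s}` is a nonzero invariant.

Conversely, the scalar `ζ = exp (2πi/k)` has determinant `ζ^k = 1` and acts on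
`V^{⊗p} ⊗ (V*)^{⊗q}` by `ζ^(p-q)`, so a nonzero invariant forces `ζ^(p-q) = 1`, i.e. `k ∣ p - q`.
-/

open scoped Classical

noncomputable section

variable (V : Type*) [AddCommGroup V] [Module ℂ V]

/-- The factors of the tensor product `V ⊗ ⋯ ⊗ V ⊗ V* ⊗ ⋯ ⊗ V*` (`p` copies of `V`
followed by `q` copies of `V*`). -/
def TensFac (p q : ℕ) : Fin p ⊕ Fin q → Type _ :=
  fun i => Sum.elim (fun _ : Fin p => V) (fun _ : Fin q => Module.Dual ℂ V) i

instance (p q : ℕ) (i : Fin p ⊕ Fin q) : AddCommGroup (TensFac V p q i) :=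
  match i with
  | .inl _ => inferInstanceAs (AddCommGroup V)
  | .inr _ => inferInstanceAs (AddCommGroup (Module.Dual ℂ V))

instance (p q : ℕ) (i : Fin p ⊕ Fin q) : Module ℂ (TensFac V p q i) :=
  match i with
  | .inl _ => inferInstanceAs (Module ℂ V)
  | .inr _ => inferInstanceAs (Module ℂ (Module.Dual ℂ V))

/-- `V^{⊗p} ⊗ (V^*)^{⊗q}`. -/
abbrev TensPQ (p q : ℕ) := PiTensorProduct ℂ (TensFac V p q)

/-- The action of `g ∈ GL(V)` on each tensor factor: naturally on `V`, and by
`g·φ = φ ∘ g⁻¹` on `V*`. -/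
def actMap (p q : ℕ) (g : (Module.End ℂ V)ˣ) (i : Fin p ⊕ Fin q) :
    TensFac V p q i →ₗ[ℂ] TensFac V p q i :=
  match i with
  | Sum.inl _ => (↑g : Module.End ℂ V)
  | Sum.inr _ => LinearMap.dualMap (↑g⁻¹ : Module.End ℂ V)

/-- The action of `g ∈ GL(V)` on `V^{⊗p} ⊗ (V^*)^{⊗q}`. -/
def tensActPQ (p q : ℕ) (g : (Module.End ℂ V)ˣ) : TensPQ V p q →ₗ[ℂ] TensPQ V p q :=
  PiTensorProduct.map (actMap V p q g)

/-- The `SL(V)`-invariant tensors in `V^{⊗p} ⊗ (V^*)^{⊗q}`: tensors fixed by every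
invertible operator of determinant `1`. -/
def tensInvSL (p q : ℕ) : Submodule ℂ (TensPQ V p q) where
  carrier := {t | ∀ g : (Module.End ℂ V)ˣ,
    LinearMap.det (↑g : Module.End ℂ V) = 1 → tensActPQ V p q g t = t}
  add_mem' := by
    intro a c ha hc g hg
    simp only [map_add, ha g hg, hc g hg]
  zero_mem' := by intro g hg; simp
  smul_mem' := by
    intro r a ha g hg
    simp only [map_smul, ha g hg]

open Matrix

section KroneckerFixed

variable {κ : Type*} [Fintype κ]

/-- `c` is the coordinate array of a tensor fixed by the Kronecker product `⨂ i, A i`. -/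
def IsKroneckerFixed {ι : Type*} [Fintype ι] [DecidableEq ι] (A : ι → Matrix κ κ ℂ)
    (c : (ι → κ) → ℂ) : Prop :=
  ∀ r', ∑ r, (∏ i, A i (r' i) (r i)) * c r = c r'

variable {ι ι₁ ι₂ : Type*} [Fintype ι] [DecidableEq ι] [Fintype ι₁] [DecidableEq ι₁]
  [Fintype ι₂] [DecidableEq ι₂]

theorem IsKroneckerFixed.comp_equiv {A : ι₁ → Matrix κ κ ℂ} {A' : ι₂ → Matrix κ κ ℂ}
    {c : (ι₂ → κ) → ℂ} (hc : IsKroneckerFixed A' c) (e : ι₁ ≃ ι₂) (hA : ∀ i, A i = A' (e i)) :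
    IsKroneckerFixed A (fun r => c (r ∘ e.symm)) := by
  intro r'
  calc ∑ r, (∏ i, A i (r' i) (r i)) * c (r ∘ e.symm)
      = ∑ r, (∏ j, A' j ((r' ∘ e.symm) j) (r j)) * c r := by
        refine Fintype.sum_equiv (e.arrowCongr (Equiv.refl κ)) _ _ fun r => ?_
        rw [← e.prod_comp]
        simp only [hA, Function.comp_apply, Equiv.arrowCongr_apply, Equiv.symm_apply_apply,
          Equiv.coe_refl, id]
        rfl
    _ = c (r' ∘ e.symm) := hc _

theorem IsKroneckerFixed.sum_elim {A₁ : ι₁ → Matrix κ κ ℂ} {A₂ : ι₂ → Matrix κ κ ℂ}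
    {c₁ : (ι₁ → κ) → ℂ} {c₂ : (ι₂ → κ) → ℂ} (h₁ : IsKroneckerFixed A₁ c₁)
    (h₂ : IsKroneckerFixed A₂ c₂) :
    IsKroneckerFixed (Sum.elim A₁ A₂) (fun r => c₁ (r ∘ Sum.inl) * c₂ (r ∘ Sum.inr)) := by
  intro r'
  calc ∑ r, (∏ i, Sum.elim A₁ A₂ i (r' i) (r i)) * (c₁ (r ∘ Sum.inl) * c₂ (r ∘ Sum.inr))
      = ∑ r : (ι₁ → κ) × (ι₂ → κ), ((∏ i, A₁ i (r' (.inl i)) (r.1 i)) * c₁ r.1) *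
          ((∏ i, A₂ i (r' (.inr i)) (r.2 i)) * c₂ r.2) := by
        refine Fintype.sum_equiv (Equiv.sumArrowEquivProdArrow ι₁ ι₂ κ) _ _ fun r => ?_
        have hfst : (Equiv.sumArrowEquivProdArrow ι₁ ι₂ κ r).1 = r ∘ Sum.inl := rfl
        have hsnd : (Equiv.sumArrowEquivProdArrow ι₁ ι₂ κ r).2 = r ∘ Sum.inr := rfl
        simp only [Fintype.prod_sum_type, Sum.elim_inl, Sum.elim_inr, hfst, hsnd,
          Function.comp_apply]
        ring
    _ = c₁ (r' ∘ Sum.inl) * c₂ (r' ∘ Sum.inr) := by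
        simp only [Fintype.sum_prod_type]
        rw [← Finset.sum_mul_sum, h₁, h₂]
        rfl

theorem IsKroneckerFixed.prod (σ : Type*) [Fintype σ] [DecidableEq σ] {A : ι → Matrix κ κ ℂ}
    {c : (ι → κ) → ℂ} (hc : IsKroneckerFixed A c) :
    IsKroneckerFixed (fun x : σ × ι => A x.2) (fun r => ∏ a, c (fun i => r (a, i))) := by
  intro r'
  refine (Fintype.sum_equiv (Equiv.curry σ ι κ) _
    (fun u => ∏ a, ((∏ i, A i (r' (a, i)) (u a i)) * c (u a))) fun r => ?_).trans ?_
  · rw [Fintype.prod_prod_type, ← Finset.prod_mul_distrib]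
    rfl
  · exact (Fintype.prod_sum fun a v => (∏ i, A i (r' (a, i)) (v i)) * c v).symm.trans
      (Finset.prod_congr rfl fun a _ => hc _)

end KroneckerFixed

section Blocks

variable {κ : Type*} [Fintype κ] [DecidableEq κ]

def signOrZero (r : κ → κ) : ℂ :=
  if h : r.Bijective then ((Equiv.Perm.sign (Equiv.ofBijective r h) : ℤ) : ℂ) else 0

theorem signOrZero_perm (σ : Equiv.Perm κ) : signOrZero ⇑σ = ((Equiv.Perm.sign σ : ℤ) : ℂ) := by
  rw [signOrZero, dif_pos σ.bijective,
    show Equiv.ofBijective σ σ.bijective = σ from Equiv.ext fun _ => rfl]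

theorem sum_mul_signOrZero (f : (κ → κ) → ℂ) :
    ∑ r, f r * signOrZero r = ∑ σ : Equiv.Perm κ, f σ * ((Equiv.Perm.sign σ : ℤ) : ℂ) := by
  refine (Fintype.sum_of_injective _ DFunLike.coe_injective _ _ (fun r hr => ?_)
    (fun σ => by rw [signOrZero_perm])).symm
  have hr' : ¬ r.Bijective := fun h => hr ⟨Equiv.ofBijective r h, rfl⟩
  rw [signOrZero, dif_neg hr', mul_zero]

theorem det_submatrix_eq_signOrZero_mul (M : Matrix κ κ ℂ) (r : κ → κ) :
    (M.submatrix r id).det = signOrZero r * M.det := by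
  by_cases h : r.Bijective
  · exact (det_permute (Equiv.ofBijective r h) M).trans (by rw [signOrZero, dif_pos h])
  · obtain ⟨i, j, hij, hne⟩ := Function.not_injective_iff.mp
      fun hinj => h (Finite.injective_iff_bijective.mp hinj)
    rw [signOrZero, dif_neg h, zero_mul]
    exact det_zero_of_row_eq hne (by ext; simp [hij])

theorem isKroneckerFixed_signOrZero {M : Matrix κ κ ℂ} (hM : M.det = 1) :
    IsKroneckerFixed (fun _ : κ => M) signOrZero := by
  intro r'
  calc ∑ r, (∏ i, M (r' i) (r i)) * signOrZero r
      = ∑ σ : Equiv.Perm κ, (∏ i, M (r' i) (σ i)) * ((Equiv.Perm.sign σ : ℤ) : ℂ) :=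
        sum_mul_signOrZero _
    _ = (M.submatrix r' id)ᵀ.det := by
        rw [det_apply']
        simp [mul_comm]
    _ = signOrZero r' := by rw [det_transpose, det_submatrix_eq_signOrZero_mul, hM, mul_one]

theorem isKroneckerFixed_pairing {M N : Matrix κ κ ℂ} (hMN : M * N = 1) :
    IsKroneckerFixed (Sum.elim (fun _ : Unit => M) (fun _ : Unit => Nᵀ))
      (fun r => if r (.inl ()) = r (.inr ()) then 1 else 0) := by
  intro r'
  calc ∑ r : Unit ⊕ Unit → κ, (∏ i, Sum.elim (fun _ => M) (fun _ => Nᵀ) i (r' i) (r i)) *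
        (if r (.inl ()) = r (.inr ()) then 1 else 0)
      = ∑ x : κ × κ, M (r' (.inl ())) x.1 * N x.2 (r' (.inr ())) *
        (if x.1 = x.2 then 1 else 0) := by
        refine Fintype.sum_equiv ((Equiv.sumArrowEquivProdArrow _ _ _).trans
          (Equiv.prodCongr (Equiv.funUnique Unit κ) (Equiv.funUnique Unit κ))) _ _ fun r => ?_
        simp [Fintype.prod_sum_type]
    _ = (M * N) (r' (.inl ())) (r' (.inr ())) := by
        simp [Fintype.sum_prod_type, mul_apply]
    _ = _ := by rw [hMN, one_apply]

end Blocks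

section SLInvariantCoeff

theorem comp_equiv_symm_ne_zero {κ ι₁ ι₂ : Type*} {c : (ι₂ → κ) → ℂ} (hc : c ≠ 0) (e : ι₁ ≃ ι₂) :
    (fun r : ι₁ → κ => c (r ∘ e.symm)) ≠ 0 := by
  obtain ⟨r, hr⟩ := Function.ne_iff.mp hc
  exact Function.ne_iff.mpr ⟨r ∘ e, by simpa [Function.comp_assoc] using hr⟩

variable {κ : Type*} [Fintype κ] [DecidableEq κ]

/-- Coordinates of a nonzero `SL`-invariant of `V^{⊗α} ⊗ (V*)^{⊗β}` with `dim V = |κ|`: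
`M` and `N` are the matrices of `g` and `g⁻¹`, and `Nᵀ` that of `g` acting on `V*`. -/
def HasSLInvariantCoeff (κ α β : Type*) [Fintype κ] [DecidableEq κ] [Fintype α] [DecidableEq α]
    [Fintype β] [DecidableEq β] : Prop :=
  ∃ c : (α ⊕ β → κ) → ℂ, c ≠ 0 ∧ ∀ M N : Matrix κ κ ℂ, M.det = 1 → M * N = 1 →
    IsKroneckerFixed (Sum.elim (fun _ : α => M) (fun _ : β => Nᵀ)) c

variable {α β α' β' : Type*} [Fintype α] [DecidableEq α] [Fintype β] [DecidableEq β]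
  [Fintype α'] [DecidableEq α'] [Fintype β'] [DecidableEq β']

theorem HasSLInvariantCoeff.congr (h : HasSLInvariantCoeff κ α β) (eα : α ≃ α') (eβ : β ≃ β') :
    HasSLInvariantCoeff κ α' β' := by
  obtain ⟨c, hc0, hc⟩ := h
  let e := (Equiv.sumCongr eα eβ).symm
  exact ⟨_, comp_equiv_symm_ne_zero hc0 e,
    fun M N hM hMN => (hc M N hM hMN).comp_equiv e (by rintro (a | b) <;> rfl)⟩

theorem HasSLInvariantCoeff.swap (h : HasSLInvariantCoeff κ α β) : HasSLInvariantCoeff κ β α := by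
  obtain ⟨c, hc0, hc⟩ := h
  refine ⟨_, comp_equiv_symm_ne_zero hc0 (Equiv.sumComm β α), fun M N hM hMN => ?_⟩
  have hN : N.det = 1 := by
    simpa [hM] using congrArg det hMN
  have hNM : Nᵀ * Mᵀ = 1 := by rw [← transpose_mul, hMN, transpose_one]
  exact (hc Nᵀ Mᵀ (by rwa [det_transpose]) hNM).comp_equiv _ (by rintro (b | a) <;> simp)

theorem HasSLInvariantCoeff.sum {α₂ β₂ : Type*} [Fintype α₂] [DecidableEq α₂] [Fintype β₂]
    [DecidableEq β₂] (h₁ : HasSLInvariantCoeff κ α β) (h₂ : HasSLInvariantCoeff κ α₂ β₂) :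
    HasSLInvariantCoeff κ (α ⊕ α₂) (β ⊕ β₂) := by
  obtain ⟨c₁, hc₁0, hc₁⟩ := h₁
  obtain ⟨c₂, hc₂0, hc₂⟩ := h₂
  obtain ⟨r₁, hr₁⟩ := Function.ne_iff.mp hc₁0
  obtain ⟨r₂, hr₂⟩ := Function.ne_iff.mp hc₂0
  have hc0 : (fun r => c₁ (r ∘ Sum.inl) * c₂ (r ∘ Sum.inr)) ≠ 0 :=
    Function.ne_iff.mpr ⟨Sum.elim r₁ r₂, mul_ne_zero hr₁ hr₂⟩
  exact ⟨_, comp_equiv_symm_ne_zero hc0 (Equiv.sumSumSumComm α α₂ β β₂),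
    fun M N hM hMN => ((hc₁ M N hM hMN).sum_elim (hc₂ M N hM hMN)).comp_equiv _
      (by rintro ((a | a) | (b | b)) <;> rfl)⟩

theorem HasSLInvariantCoeff.prod (σ : Type*) [Fintype σ] [DecidableEq σ]
    (h : HasSLInvariantCoeff κ α β) : HasSLInvariantCoeff κ (σ × α) (σ × β) := by
  obtain ⟨c, hc0, hc⟩ := h
  obtain ⟨r₀, hr₀⟩ := Function.ne_iff.mp hc0
  have hc0' : (fun r : σ × (α ⊕ β) → κ => ∏ a, c (fun i => r (a, i))) ≠ 0 :=
    Function.ne_iff.mpr ⟨fun x => r₀ x.2, Finset.prod_ne_zero_iff.mpr fun _ _ => hr₀⟩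
  exact ⟨_, comp_equiv_symm_ne_zero hc0' (Equiv.prodSumDistrib σ α β).symm,
    fun M N hM hMN => ((hc M N hM hMN).prod σ).comp_equiv _ (by rintro (⟨a, i⟩ | ⟨a, i⟩) <;> rfl)⟩

theorem hasSLInvariantCoeff_det : HasSLInvariantCoeff κ κ Empty := by
  have hc0 : (signOrZero : (κ → κ) → ℂ) ≠ 0 :=
    Function.ne_iff.mpr ⟨⇑(1 : Equiv.Perm κ), by rw [signOrZero_perm]; simp⟩
  exact ⟨_, comp_equiv_symm_ne_zero hc0 (Equiv.sumEmpty κ Empty),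
    fun M N hM _ => (isKroneckerFixed_signOrZero hM).comp_equiv _
      (by rintro (i | i) <;> [rfl; exact i.elim])⟩

theorem hasSLInvariantCoeff_pairing [Nonempty κ] : HasSLInvariantCoeff κ Unit Unit :=
  ⟨_, Function.ne_iff.mpr ⟨fun _ => Classical.arbitrary κ, by simp⟩,
    fun _ _ _ hMN => isKroneckerFixed_pairing hMN⟩

theorem hasSLInvariantCoeff_fin {k p q : ℕ} (hk : 0 < k) {m n s : ℕ} (hp : p = m * k + s)
    (hq : q = n * k + s) : HasSLInvariantCoeff (Fin k) (Fin p) (Fin q) := by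
  have : Nonempty (Fin k) := ⟨⟨0, hk⟩⟩
  have h := ((hasSLInvariantCoeff_det.prod (Fin m)).sum
    ((hasSLInvariantCoeff_det (κ := Fin k)).swap.prod (Fin n))).sum
    (hasSLInvariantCoeff_pairing.prod (Fin s))
  exact h.congr (Fintype.equivFinOfCardEq (by simp [hp])) (Fintype.equivFinOfCardEq (by simp [hq]))

end SLInvariantCoeff

section PiTensorBasis

open PiTensorProduct

variable {ι κ : Type*} [Fintype ι] [DecidableEq ι] [Fintype κ] [DecidableEq κ] {s : ι → Type*}
  [∀ i, AddCommGroup (s i)] [∀ i, Module ℂ (s i)]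

theorem map_piTensorProduct_basis (e : ∀ i, Module.Basis κ ℂ (s i)) (f : ∀ i, Module.End ℂ (s i))
    (r : ι → κ) :
    map f (Basis.piTensorProduct e r) =
      ∑ r', (∏ i, LinearMap.toMatrix (e i) (e i) (f i) (r' i) (r i)) •
        Basis.piTensorProduct e r' := by
  have hf : ∀ i j, f i (e i j) = ∑ j', LinearMap.toMatrix (e i) (e i) (f i) j' j • e i j' :=
    fun i j => by rw [← Matrix.toLin_self (e i) (e i), Matrix.toLin_toMatrix]
  simp only [Basis.piTensorProduct_apply, map_tprod, hf, MultilinearMap.map_sum,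
    MultilinearMap.map_smul_univ]

theorem map_sum_smul_piTensorProduct_basis (e : ∀ i, Module.Basis κ ℂ (s i))
    (f : ∀ i, Module.End ℂ (s i)) {c : (ι → κ) → ℂ}
    (hc : IsKroneckerFixed (fun i => LinearMap.toMatrix (e i) (e i) (f i)) c) :
    map f (∑ r, c r • Basis.piTensorProduct e r) = ∑ r, c r • Basis.piTensorProduct e r := by
  simp only [map_sum, map_smul, map_piTensorProduct_basis, Finset.smul_sum, smul_smul]
  rw [Finset.sum_comm]
  refine Finset.sum_congr rfl fun r' _ => ?_
  rw [← Finset.sum_smul, ← hc r']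
  simp only [mul_comm]

omit [DecidableEq ι] in
theorem map_smul_id (a : ι → ℂ) :
    map (fun i => a i • (LinearMap.id : s i →ₗ[ℂ] s i)) = (∏ i, a i) • LinearMap.id := by
  ext v
  simp [MultilinearMap.map_smul_univ]

end PiTensorBasis

def tensFacBasis {k : ℕ} (b : Module.Basis (Fin k) ℂ V) (p q : ℕ) :
    ∀ i : Fin p ⊕ Fin q, Module.Basis (Fin k) ℂ (TensFac V p q i)
  | .inl _ => b
  | .inr _ => b.dualBasis

section TensPQ

variable {k p q : ℕ}

theorem toMatrix_actMap (b : Module.Basis (Fin k) ℂ V) (g : (Module.End ℂ V)ˣ)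
    (i : Fin p ⊕ Fin q) :
    LinearMap.toMatrix (tensFacBasis V b p q i) (tensFacBasis V b p q i) (actMap V p q g i) =
      Sum.elim (fun _ => LinearMap.toMatrix b b ↑g) (fun _ => (LinearMap.toMatrix b b ↑g⁻¹)ᵀ)
        i := by
  rcases i with i | i
  · rfl
  · exact LinearMap.toMatrix_transpose _

theorem tensInvSL_ne_bot_of_hasSLInvariantCoeff (b : Module.Basis (Fin k) ℂ V)
    (h : HasSLInvariantCoeff (Fin k) (Fin p) (Fin q)) : tensInvSL V p q ≠ ⊥ := by
  obtain ⟨c, hc0, hc⟩ := h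
  let ℬ := Basis.piTensorProduct (tensFacBasis V b p q)
  refine (Submodule.ne_bot_iff _).mpr ⟨∑ r, c r • ℬ r, fun g hg => ?_, fun h0 => hc0 ?_⟩
  · have hM : (LinearMap.toMatrix b b ↑g).det = 1 := by rwa [LinearMap.det_toMatrix]
    have hMN : LinearMap.toMatrix b b ↑g * LinearMap.toMatrix b b ↑g⁻¹ = 1 := by
      rw [← LinearMap.toMatrix_mul, Units.mul_inv, LinearMap.toMatrix_one]
    refine map_sum_smul_piTensorProduct_basis _ _ ?_
    rw [funext (toMatrix_actMap V b g)]
    exact hc _ _ hM hMN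
  · exact funext (Fintype.linearIndependent_iff.mp ℬ.linearIndependent c h0)

theorem tensActPQ_algebraMap (ζ : ℂ) (hζ : ζ ≠ 0) :
    tensActPQ V p q (Units.map (algebraMap ℂ (Module.End ℂ V) : ℂ →* Module.End ℂ V)
      (Units.mk0 ζ hζ)) = (ζ ^ p * ζ⁻¹ ^ q) • LinearMap.id := by
  have hact : actMap V p q (Units.map (algebraMap ℂ (Module.End ℂ V) : ℂ →* Module.End ℂ V)
      (Units.mk0 ζ hζ)) = fun i => Sum.elim (fun _ => ζ) (fun _ => ζ⁻¹) i • LinearMap.id := by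
    funext i
    rcases i with i | i
    · rfl
    · refine LinearMap.ext fun φ => LinearMap.ext fun v => ?_
      exact (φ : Module.Dual ℂ V).map_smul ζ⁻¹ v
  rw [tensActPQ, hact, map_smul_id, Fintype.prod_sum_type]
  simp

theorem dvd_sub_of_tensInvSL_ne_bot [FiniteDimensional ℂ V] (hk : 0 < k)
    (hV : Module.finrank ℂ V = k) (h : tensInvSL V p q ≠ ⊥) : (k : ℤ) ∣ (p : ℤ) - q := by
  obtain ⟨t, ht, ht0⟩ := (Submodule.ne_bot_iff _).mp h
  have hζ := Complex.isPrimitiveRoot_exp k hk.ne'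
  set ζ := Complex.exp (2 * Real.pi * Complex.I / k)
  have hζ0 : ζ ≠ 0 := hζ.ne_zero hk.ne'
  have hdet : LinearMap.det (algebraMap ℂ (Module.End ℂ V) ζ) = 1 := by
    rw [Module.algebraMap_end_eq_smul_id, LinearMap.det_smul, LinearMap.det_id, hV,
      hζ.pow_eq_one, one_mul]
  have hfix := ht (Units.map (algebraMap ℂ (Module.End ℂ V) : ℂ →* Module.End ℂ V)
    (Units.mk0 ζ hζ0)) hdet
  rw [tensActPQ_algebraMap, LinearMap.smul_apply, LinearMap.id_apply] at hfix
  have hpq : ζ ^ p * ζ⁻¹ ^ q = 1 := smul_left_injective ℂ ht0 (by simpa using hfix)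
  rwa [← hζ.zpow_eq_one_iff_dvd, zpow_sub₀ hζ0, zpow_natCast, zpow_natCast, div_eq_mul_inv,
    ← inv_pow]

end TensPQ

theorem exists_eq_mul_add_of_intCast_dvd_sub {k p q : ℕ} (h : (k : ℤ) ∣ (p : ℤ) - q) :
    ∃ m n s, p = m * k + s ∧ q = n * k + s := by
  obtain ⟨d, hd⟩ := h
  rcases Int.eq_nat_or_neg d with ⟨m, rfl | rfl⟩
  · exact ⟨m, 0, q, by zify; linarith, by simp⟩
  · exact ⟨0, m, p, by simp, by zify; linarith⟩

theorem statement7 (k p q : ℕ) (hk : 0 < k) [FiniteDimensional ℂ V]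
    (hV : Module.finrank ℂ V = k) :
    tensInvSL V p q ≠ ⊥ ↔ (k : ℤ) ∣ ((p : ℤ) - (q : ℤ)) := by
  refine ⟨dvd_sub_of_tensInvSL_ne_bot V hk hV, fun hdvd => ?_⟩
  obtain ⟨m, n, s, hp, hq⟩ := exists_eq_mul_add_of_intCast_dvd_sub hdvd
  exact tensInvSL_ne_bot_of_hasSLInvariantCoeff V (Module.finBasisOfFinrankEq ℂ V hV)
    (hasSLInvariantCoeff_fin hk hp hq)
end
end
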